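/- Let β(α) be defined implicitly by (1+α)^{-1/2} = ∫₀^∞ (1+β/u)^{-1/2} k_λ(u) du. Then β(α)/α is nondecreasing in α on (0,∞). -/

import Mathlib

/-!
Write `f x = (1 + x) ^ (-1/2)` and `G b = ∫₀^∞ f (b / u) k_λ(u) du`, a strictly decreasing function
of `b ≥ 0`, so that `f α = G (β α)`. For `c ≥ 1` and `x₀ ≥ 0` the function `x ↦ f (c x) - c M f x`
with `M = ((1 + x₀) / (1 + c x₀)) ^ (3/2)` is minimal at `x₀`, since its derivative has the sign of
`x - x₀`; this is the supporting line at `f x₀` of the convex function `y ↦ f (c f⁻¹ y)`, which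
takes the place of Jensen's inequality.
Integrating it at `x₀ = α` against `k_λ` gives `G (c β α) ≥ f (c α) = G (β (c α))`,
hence `c β α ≤ β (c α)`.
-/

open MeasureTheory ProbabilityTheory Real Set

/-- Gamma(shape l/2, rate l/2) density (on `(0,∞)`). -/
noncomputable def gammaPdf (l u : ℝ) : ℝ :=
  ((l / 2) ^ (l / 2) / Real.Gamma (l / 2)) * u ^ (l / 2 - 1) * Real.exp (-(l * u / 2))

namespace ProbabilityTheory

lemma integrable_gammaPDFReal {a r : ℝ} (ha : 0 < a) (hr : 0 < r) :
    Integrable (gammaPDFReal a r) := by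
  refine ⟨(measurable_gammaPDFReal a r).aestronglyMeasurable,
    (hasFiniteIntegral_iff_ofReal (ae_of_all _ (gammaPDFReal_nonneg ha hr))).2 ?_⟩
  change ∫⁻ x, gammaPDF a r x < ⊤
  simp [lintegral_gammaPDF_eq_one ha hr]

lemma integral_gammaPDFReal_eq_one {a r : ℝ} (ha : 0 < a) (hr : 0 < r) :
    ∫ x, gammaPDFReal a r x = 1 := by
  rw [integral_eq_lintegral_of_nonneg_ae (ae_of_all _ (gammaPDFReal_nonneg ha hr))
    (measurable_gammaPDFReal a r).aestronglyMeasurable]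
  change (∫⁻ x, gammaPDF a r x).toReal = 1
  simp [lintegral_gammaPDF_eq_one ha hr]

end ProbabilityTheory

lemma gammaPdf_eq_gammaPDFReal (l : ℝ) {u : ℝ} (hu : 0 ≤ u) :
    gammaPdf l u = gammaPDFReal (l / 2) (l / 2) u := by
  rw [gammaPDFReal, if_pos hu, gammaPdf, show l / 2 * u = l * u / 2 by ring]

lemma gammaPdf_pos {l u : ℝ} (hl : 0 < l) (hu : 0 < u) : 0 < gammaPdf l u := by
  rw [gammaPdf_eq_gammaPDFReal l hu.le]
  exact gammaPDFReal_pos (half_pos hl) (half_pos hl) hu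

lemma integrableOn_gammaPdf {l : ℝ} (hl : 0 < l) : IntegrableOn (gammaPdf l) (Ioi 0) :=
  (integrable_gammaPDFReal (half_pos hl) (half_pos hl)).integrableOn.congr_fun
    (fun _ hu ↦ (gammaPdf_eq_gammaPDFReal l (le_of_lt hu)).symm) measurableSet_Ioi

lemma setIntegral_gammaPdf_Ioi {l : ℝ} (hl : 0 < l) : ∫ u in Ioi 0, gammaPdf l u = 1 := by
  rw [setIntegral_congr_fun measurableSet_Ioi fun _ hu ↦ gammaPdf_eq_gammaPDFReal l (le_of_lt hu),
    ← integral_Ici_eq_integral_Ioi, setIntegral_eq_integral_of_forall_compl_eq_zero fun u hu ↦ ?_,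
    integral_gammaPDFReal_eq_one (half_pos hl) (half_pos hl)]
  exact if_neg hu

lemma antitoneOn_one_add_div_one_add_mul {c : ℝ} (hc : 1 ≤ c) :
    AntitoneOn (fun x : ℝ ↦ (1 + x) / (1 + c * x)) (Ici 0) := by
  intro x hx y hy hxy
  simp only [mem_Ici] at hx hy
  rw [div_le_div_iff₀ (by positivity) (by positivity)]
  nlinarith [mul_nonneg (sub_nonneg.2 hc) (sub_nonneg.2 hxy)]

lemma one_add_mul_rpow_neg {c x : ℝ} (hc : 0 ≤ c) (hx : 0 ≤ x) (s : ℝ) :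
    (1 + c * x) ^ (-s) = ((1 + x) / (1 + c * x)) ^ s * (1 + x) ^ (-s) := by
  have h1 : 0 < 1 + x := by positivity
  have h2 : 0 < 1 + c * x := by positivity
  rw [div_rpow h1.le h2.le, rpow_neg h1.le, rpow_neg h2.le]
  field_simp [(rpow_pos_of_pos h1 s).ne']

lemma hasDerivAt_rpow_neg_half_sub_mul {c m x : ℝ} (hc : 0 ≤ c) (hx : 0 ≤ x) :
    HasDerivAt (fun y ↦ (1 + c * y) ^ (-(1 / 2 : ℝ)) - c * m * (1 + y) ^ (-(1 / 2 : ℝ)))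
      (c / 2 * (1 + x) ^ (-(3 / 2 : ℝ)) * (m - ((1 + x) / (1 + c * x)) ^ (3 / 2 : ℝ))) x := by
  have h1 : HasDerivAt (fun y ↦ 1 + c * y) c x := by
    simpa using ((hasDerivAt_id x).const_mul c).const_add 1
  have h2 : HasDerivAt (fun y ↦ 1 + y) 1 x := (hasDerivAt_id x).const_add 1
  have := (h1.rpow_const (p := -(1 / 2)) (Or.inl (by positivity))).sub
    ((h2.rpow_const (p := -(1 / 2)) (Or.inl (by positivity))).const_mul (c * m))
  refine this.congr_deriv ?_
  rw [show -(1 / 2 : ℝ) - 1 = -(3 / 2) by norm_num, one_add_mul_rpow_neg hc hx]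
  ring

lemma rpow_neg_half_tangent_le {c x₀ x : ℝ} (hc : 1 ≤ c) (hx₀ : 0 ≤ x₀) (hx : 0 ≤ x) :
    c * ((1 + x₀) / (1 + c * x₀)) ^ (3 / 2 : ℝ)
        * ((1 + x) ^ (-(1 / 2 : ℝ)) - (1 + x₀) ^ (-(1 / 2 : ℝ)))
      ≤ (1 + c * x) ^ (-(1 / 2 : ℝ)) - (1 + c * x₀) ^ (-(1 / 2 : ℝ)) := by
  set ratio : ℝ → ℝ := fun y ↦ (1 + y) / (1 + c * y)
  set F : ℝ → ℝ := fun y ↦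
    (1 + c * y) ^ (-(1 / 2 : ℝ)) - c * ratio x₀ ^ (3 / 2 : ℝ) * (1 + y) ^ (-(1 / 2 : ℝ))
  set F' : ℝ → ℝ := fun y ↦
    c / 2 * (1 + y) ^ (-(3 / 2 : ℝ)) * (ratio x₀ ^ (3 / 2 : ℝ) - ratio y ^ (3 / 2 : ℝ))
  have hc0 : 0 ≤ c := zero_le_one.trans hc
  have hF : ∀ y ∈ Ici (0 : ℝ), HasDerivAt F (F' y) y := fun y hy ↦
    hasDerivAt_rpow_neg_half_sub_mul hc0 hy
  have hF_cont : ContinuousOn F (Ici 0) := fun y hy ↦ (hF y hy).continuousAt.continuousWithinAt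
  have hratio_nonneg : ∀ y ∈ Ici (0 : ℝ), 0 ≤ ratio y := fun y (hy : 0 ≤ y) ↦ by positivity
  have hF'_sign : ∀ y ∈ Ici (0 : ℝ), (x₀ ≤ y → 0 ≤ F' y) ∧ (y ≤ x₀ → F' y ≤ 0) := by
    intro y hy
    have hpos : 0 ≤ c / 2 * (1 + y) ^ (-(3 / 2 : ℝ)) := by
      have : 0 ≤ y := hy
      positivity
    refine ⟨fun hxy ↦ mul_nonneg hpos (sub_nonneg.2 ?_),
      fun hxy ↦ mul_nonpos_of_nonneg_of_nonpos hpos (sub_nonpos.2 ?_)⟩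
    · exact rpow_le_rpow (hratio_nonneg y hy)
        (antitoneOn_one_add_div_one_add_mul hc hx₀ hy hxy) (by norm_num)
    · exact rpow_le_rpow (hratio_nonneg x₀ hx₀)
        (antitoneOn_one_add_div_one_add_mul hc hy hx₀ hxy) (by norm_num)
  have hmono : MonotoneOn F (Ici x₀) := by
    refine monotoneOn_of_hasDerivWithinAt_nonneg (f' := F') (convex_Ici x₀)
      (hF_cont.mono (Ici_subset_Ici.2 hx₀)) (fun y hy ↦ ?_) (fun y hy ↦ ?_) <;>
    rw [interior_Ici] at hy
    · exact (hF y (hx₀.trans hy.le)).hasDerivWithinAt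
    · exact (hF'_sign y (hx₀.trans hy.le)).1 hy.le
  have hanti : AntitoneOn F (Icc 0 x₀) := by
    refine antitoneOn_of_hasDerivWithinAt_nonpos (f' := F') (convex_Icc 0 x₀)
      (hF_cont.mono Icc_subset_Ici_self) (fun y hy ↦ ?_) (fun y hy ↦ ?_) <;>
    rw [interior_Icc] at hy
    · exact (hF y hy.1.le).hasDerivWithinAt
    · exact (hF'_sign y hy.1.le).2 hy.2.le
  have hmin : F x₀ ≤ F x := by
    rcases le_total x x₀ with h | h
    · exact hanti ⟨hx, h⟩ ⟨hx₀, le_rfl⟩ h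
    · exact hmono (mem_Ici.2 le_rfl) h h
  simp only [F] at hmin
  linarith

noncomputable def invSqrtMixture (p : ℝ → ℝ) (b : ℝ) : ℝ :=
  ∫ u in Ioi 0, (1 + b / u) ^ (-(1 / 2 : ℝ)) * p u

section InvSqrtMixture

variable {p : ℝ → ℝ} {b u : ℝ}

lemma one_add_div_rpow_neg_half_le_one (hb : 0 ≤ b) (hu : 0 < u) :
    (1 + b / u) ^ (-(1 / 2 : ℝ)) ≤ 1 :=
  rpow_le_one_of_one_le_of_nonpos (le_add_of_nonneg_right (by positivity)) (by norm_num)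

lemma integrableOn_one_add_div_rpow_neg_half_mul (hp : IntegrableOn p (Ioi 0)) (hb : 0 ≤ b) :
    IntegrableOn (fun u ↦ (1 + b / u) ^ (-(1 / 2 : ℝ)) * p u) (Ioi 0) := by
  refine hp.bdd_mul (c := 1) (Measurable.aestronglyMeasurable (by fun_prop)) ?_
  filter_upwards [ae_restrict_mem measurableSet_Ioi] with u (hu : 0 < u)
  rw [norm_of_nonneg (by positivity)]
  exact one_add_div_rpow_neg_half_le_one hb hu

lemma invSqrtMixture_strictAntiOn (hp : IntegrableOn p (Ioi 0)) (hp_pos : ∀ u ∈ Ioi 0, 0 < p u) :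
    StrictAntiOn (invSqrtMixture p) (Ici 0) := by
  intro b₁ (hb₁ : 0 ≤ b₁) b₂ (hb₂ : 0 ≤ b₂) hb
  have hint₁ := integrableOn_one_add_div_rpow_neg_half_mul hp hb₁
  have hint₂ := integrableOn_one_add_div_rpow_neg_half_mul hp hb₂
  have hlt : ∀ u ∈ Ioi (0 : ℝ), (1 + b₂ / u) ^ (-(1 / 2 : ℝ)) * p u
      < (1 + b₁ / u) ^ (-(1 / 2 : ℝ)) * p u := fun u (hu : 0 < u) ↦ by
    refine mul_lt_mul_of_pos_right ?_ (hp_pos u hu)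
    exact rpow_lt_rpow_of_neg (by positivity) (by gcongr) (by norm_num)
  rw [invSqrtMixture, invSqrtMixture, ← sub_pos, ← integral_sub hint₁ hint₂,
    setIntegral_pos_iff_support_of_nonneg_ae
      ((ae_restrict_iff' measurableSet_Ioi).2 (ae_of_all _ fun u hu ↦ (sub_pos.2 (hlt u hu)).le))
      (hint₁.sub hint₂)]
  have : Ioi (0 : ℝ) ⊆ Function.support _ ∩ Ioi 0 := fun u hu ↦
    ⟨(sub_pos.2 (hlt u hu)).ne', hu⟩
  exact (measure_mono this).trans_lt' (by simp)

lemma rpow_neg_half_mul_le_invSqrtMixture_mul (hp : IntegrableOn p (Ioi 0))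
    (hp_nonneg : ∀ u ∈ Ioi 0, 0 ≤ p u) (hp_one : ∫ u in Ioi 0, p u = 1) {a c : ℝ} (hc : 1 ≤ c)
    (ha : 0 ≤ a) (hb : 0 ≤ b) (hab : (1 + a) ^ (-(1 / 2 : ℝ)) = invSqrtMixture p b) :
    (1 + c * a) ^ (-(1 / 2 : ℝ)) ≤ invSqrtMixture p (c * b) := by
  set m := c * ((1 + a) / (1 + c * a)) ^ (3 / 2 : ℝ)
  have hpt : ∀ u ∈ Ioi (0 : ℝ),
      m * ((1 + b / u) ^ (-(1 / 2 : ℝ)) * p u)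
        + ((1 + c * a) ^ (-(1 / 2 : ℝ)) - m * (1 + a) ^ (-(1 / 2 : ℝ))) * p u
      ≤ (1 + c * b / u) ^ (-(1 / 2 : ℝ)) * p u := fun u (hu : 0 < u) ↦ by
    have := rpow_neg_half_tangent_le hc ha (div_nonneg hb hu.le)
    rw [mul_div_assoc]
    nlinarith [hp_nonneg u hu]
  have hint₁ := integrableOn_one_add_div_rpow_neg_half_mul hp hb
  calc (1 + c * a) ^ (-(1 / 2 : ℝ))
      = ∫ u in Ioi 0, m * ((1 + b / u) ^ (-(1 / 2 : ℝ)) * p u)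
          + ((1 + c * a) ^ (-(1 / 2 : ℝ)) - m * (1 + a) ^ (-(1 / 2 : ℝ))) * p u := by
        rw [integral_add (hint₁.const_mul m) (hp.const_mul _), integral_const_mul,
          integral_const_mul, hp_one, ← invSqrtMixture, ← hab]
        ring
    _ ≤ invSqrtMixture p (c * b) :=
        setIntegral_mono_on ((hint₁.const_mul m).add (hp.const_mul _))
          (integrableOn_one_add_div_rpow_neg_half_mul hp (by positivity)) measurableSet_Ioi hpt

lemma mul_le_of_rpow_neg_half_eq_invSqrtMixture (hp : IntegrableOn p (Ioi 0))
    (hp_pos : ∀ u ∈ Ioi 0, 0 < p u) (hp_one : ∫ u in Ioi 0, p u = 1) {a b' c : ℝ} (hc : 1 ≤ c)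
    (ha : 0 ≤ a) (hb : 0 ≤ b) (hb' : 0 ≤ b') (hab : (1 + a) ^ (-(1 / 2 : ℝ)) = invSqrtMixture p b)
    (hab' : (1 + c * a) ^ (-(1 / 2 : ℝ)) = invSqrtMixture p b') :
    c * b ≤ b' := by
  have hcb : 0 ≤ c * b := mul_nonneg (zero_le_one.trans hc) hb
  rw [← (invSqrtMixture_strictAntiOn hp hp_pos).le_iff_ge hb' hcb, ← hab']
  exact rpow_neg_half_mul_le_invSqrtMixture_mul hp (fun u hu ↦ (hp_pos u hu).le) hp_one hc ha hb hab

end InvSqrtMixture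

/-- If `β(α)` solves `(1+α)^{-1/2} = ∫₀^∞ (1+β/u)^{-1/2} k_λ(u) du`
for each `α > 0`, then `β(α)/α` is nondecreasing in `α` on `(0,∞)`. -/
theorem stmt12 (l : ℝ) (hl : 0 < l) (β : ℝ → ℝ)
    (hβ : ∀ α : ℝ, 0 < α → 0 < β α ∧
      (1 + α) ^ (-(1 / 2 : ℝ)) =
        ∫ u in Set.Ioi (0 : ℝ), (1 + β α / u) ^ (-(1 / 2 : ℝ)) * gammaPdf l u) :
    ∀ α1 α2 : ℝ, 0 < α1 → α1 ≤ α2 → β α1 / α1 ≤ β α2 / α2 := by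
  intro α₁ α₂ hα₁ h₁₂
  have hα₂ : 0 < α₂ := hα₁.trans_le h₁₂
  obtain ⟨hβ₁, h₁⟩ := hβ α₁ hα₁
  obtain ⟨hβ₂, h₂⟩ := hβ α₂ hα₂
  have hscale : α₂ / α₁ * β α₁ ≤ β α₂ :=
    mul_le_of_rpow_neg_half_eq_invSqrtMixture (integrableOn_gammaPdf hl)
      (fun _ hu ↦ gammaPdf_pos hl hu) (setIntegral_gammaPdf_Ioi hl) ((one_le_div hα₁).2 h₁₂)
      hα₁.le hβ₁.le hβ₂.le h₁ (by rwa [div_mul_cancel₀ _ hα₁.ne'])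
  calc β α₁ / α₁ = α₂ / α₁ * β α₁ / α₂ := by field_simp
    _ ≤ β α₂ / α₂ := by gcongr
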